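/- Let T be a finite rooted tree with underlying graph G = U(T). The assignment sending a layering (F; L_0 ⊇ L_1 ⊇ ⋯ ⊇ L_n) in X^T_n to (U(F); S_1, …, S_n) with S_i = L_{i-1} ∖ L_i defines a simplicial map U : X^T → X^G, i.e., it commutes with all face and degeneracy maps. -/

import Mathlib

/-- A finite rooted tree, encoded as a finite partial order with a least element
(the root) in which the set of elements below any given vertex is totally
ordered.  Edges of the tree are the covering pairs of the order. -/
structure CutTree where
  V : Type
  [fintypeV : Fintype V]
  [decEq : DecidableEq V]
  [po : PartialOrder V]
  root : V
  root_le : ∀ v : V, root ≤ v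
  lower_total : ∀ v a b : V, a ≤ v → b ≤ v → a ≤ b ∨ b ≤ a

attribute [instance] CutTree.fintypeV CutTree.decEq CutTree.po

namespace CutTree

variable (T : CutTree)

/-- A subset of the vertices defines a lower subtree when it is downward closed. -/
def IsLower (L : Set T.V) : Prop := ∀ ⦃a b : T.V⦄, a ≤ b → b ∈ L → a ∈ L

/-- `L` defines a lower subforest of the admissible subforest with vertex set `H`. -/
def IsLowerIn (H L : Set T.V) : Prop :=
  L ⊆ H ∧ ∀ ⦃a b : T.V⦄, a ∈ H → b ∈ L → a ≤ b → a ∈ L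

/-- `H` is the vertex set of an admissible subforest: a difference of two nested
downward closed sets. -/
def IsAdmissible (H : Set T.V) : Prop :=
  ∃ A B : Set T.V, T.IsLower A ∧ T.IsLower B ∧ B ⊆ A ∧ H = A \ B

theorem isLower_empty : T.IsLower (∅ : Set T.V) := fun _ _ _ h => h.elim

theorem isAdmissible_empty : T.IsAdmissible (∅ : Set T.V) :=
  ⟨∅, ∅, T.isLower_empty, T.isLower_empty, le_rfl, by simp⟩

/-- An `n`-simplex of the 2-Segal set `X^T`: an admissible subforest `H = L 0`
together with a layering of cuts `H = L 0 ⊇ L 1 ⊇ ⋯ ⊇ L n = ∅` by lower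
subforests of `H`. -/
@[ext]
structure Simplex (T : CutTree) (n : ℕ) where
  L : Fin (n + 1) → Set T.V
  admissible : T.IsAdmissible (L 0)
  antitone : Antitone L
  lowerIn : ∀ i, T.IsLowerIn (L 0) (L i)
  last_eq : L (Fin.last n) = ∅

theorem isAdmissible_diff {H P Q : Set T.V} (hH : T.IsAdmissible H)
    (hP : T.IsLowerIn H P) (hQ : T.IsLowerIn H Q) (hQP : Q ⊆ P) :
    T.IsAdmissible (P \ Q) := by
  obtain ⟨A, B, hA, hB, hBA, rfl⟩ := hH
  have hlow : ∀ R : Set T.V, T.IsLowerIn (A \ B) R → T.IsLower (R ∪ B) := by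
    rintro R ⟨hRsub, hRcl⟩ a b hab hb
    rcases hb with hb | hb
    · have hbA : b ∈ A := (hRsub hb).1
      have haA : a ∈ A := hA hab hbA
      by_cases haB : a ∈ B
      · exact Or.inr haB
      · exact Or.inl (hRcl ⟨haA, haB⟩ hb hab)
    · exact Or.inr (hB hab hb)
  refine ⟨P ∪ B, Q ∪ B, hlow P hP, hlow Q hQ, Set.union_subset_union_left _ hQP, ?_⟩
  ext x
  constructor
  · rintro ⟨hxP, hxQ⟩
    have hxB : x ∉ B := (hP.1 hxP).2
    exact ⟨Or.inl hxP, by rintro (h | h) <;> [exact hxQ h; exact hxB h]⟩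
  · rintro ⟨hx1, hx2⟩
    rcases hx1 with hx1 | hx1
    · exact ⟨hx1, fun h => hx2 (Or.inl h)⟩
    · exact absurd (Or.inr hx1) hx2

/-- The action of a simplicial operator `α : [m] → [n]` on `X^T`. -/
def act {m n : ℕ} (α : Fin (m + 1) → Fin (n + 1)) (hα : Monotone α)
    (σ : T.Simplex n) : T.Simplex m where
  L j := σ.L (α j) \ σ.L (α (Fin.last m))
  admissible := by
    refine T.isAdmissible_diff σ.admissible (σ.lowerIn _) (σ.lowerIn _) ?_
    exact σ.antitone (hα (Fin.le_last _))
  antitone := by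
    intro j k hjk
    exact Set.diff_subset_diff_left (σ.antitone (hα hjk))
  lowerIn := by
    intro i
    constructor
    · exact Set.diff_subset_diff_left (σ.antitone (hα (Fin.zero_le _)))
    · rintro a b ⟨haL, haS⟩ ⟨hbL, _⟩ hab
      have ha0 : a ∈ σ.L 0 := (σ.lowerIn (α 0)).1 haL
      exact ⟨(σ.lowerIn (α i)).2 ha0 hbL hab, haS⟩
  last_eq := Set.diff_self

/-- The `i`-th face map `X^T_{n+1} → X^T_n`. -/
def face {n : ℕ} (i : Fin (n + 2)) : T.Simplex (n + 1) → T.Simplex n :=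
  T.act i.succAbove (Fin.strictMono_succAbove i).monotone

/-- The `i`-th degeneracy map `X^T_n → X^T_{n+1}`. -/
def degen {n : ℕ} (i : Fin (n + 1)) : T.Simplex n → T.Simplex (n + 1) :=
  T.act i.predAbove (Fin.predAbove_right_monotone i)

end CutTree


section GraphCore

variable {V : Type}

theorem telescope_iUnion {m : ℕ} (M : Fin (m + 1) → Set V) (hM : Antitone M) :
    (⋃ j : Fin m, (M j.castSucc \ M j.succ)) = M 0 \ M (Fin.last m) := by
  ext x
  simp only [Set.mem_iUnion, Set.mem_diff]
  constructor
  · rintro ⟨j, hj1, hj2⟩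
    refine ⟨hM (Fin.zero_le _) hj1, fun hx => hj2 (hM (Fin.le_last _) hx)⟩
  · rintro ⟨h0, hlast⟩
    by_contra hno
    push_neg at hno
    have hall : ∀ j : Fin (m + 1), x ∈ M j := by
      intro j
      induction j using Fin.induction with
      | zero => exact h0
      | succ j ih => exact (hno j ih)
    exact hlast (hall _)

theorem disjoint_layers {m : ℕ} (M : Fin (m + 1) → Set V) (hM : Antitone M) :
    ∀ i j : Fin m, i ≠ j →
      Disjoint (M i.castSucc \ M i.succ) (M j.castSucc \ M j.succ) := by
  have key : ∀ i j : Fin m, i < j →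
      Disjoint (M i.castSucc \ M i.succ) (M j.castSucc \ M j.succ) := by
    intro i j hij
    rw [Set.disjoint_left]
    rintro x ⟨_, hxi⟩ ⟨hxj, _⟩
    have : M j.castSucc ⊆ M i.succ := hM (by
      rw [Fin.succ_le_castSucc_iff]; exact hij)
    exact hxi (this hxj)
  intro i j hij
  rcases lt_or_gt_of_ne hij with h | h
  · exact key i j h
  · exact (key j i h).symm

/-- An `n`-simplex of the 2-Segal set `X^G` of a graph `G`: a subgraph `H`
together with an ordered partition of its vertices into `n` possibly empty
parts. -/
@[ext]
structure GSimplex {V : Type} (G : SimpleGraph V) (n : ℕ) where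
  H : G.Subgraph
  S : Fin n → Set V
  cover : (⋃ i, S i) = H.verts
  disj : ∀ i j : Fin n, i ≠ j → Disjoint (S i) (S j)

namespace GSimplex

variable {G : SimpleGraph V}

/-- The chain of "remaining" vertex sets of a partitioned subgraph:
`chain σ j` is the union of the parts with index `≥ j`. -/
def chain {n : ℕ} (σ : GSimplex G n) (j : Fin (n + 1)) : Set V :=
  ⋃ k : Fin n, if j ≤ k.castSucc then σ.S k else ∅

theorem chain_antitone {n : ℕ} (σ : GSimplex G n) : Antitone σ.chain := by
  intro j j' hjj'
  refine Set.iUnion_subset fun k => ?_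
  by_cases h : j' ≤ k.castSucc
  · simp only [h, if_pos]
    exact Set.subset_iUnion_of_subset k (by simp [hjj'.trans h])
  · simp [h]

theorem chain_zero {n : ℕ} (σ : GSimplex G n) : σ.chain 0 = σ.H.verts := by
  rw [← σ.cover]
  unfold chain

  ext k
  simp [Fin.zero_le]

theorem chain_last {n : ℕ} (σ : GSimplex G n) : σ.chain (Fin.last n) = ∅ := by
  unfold chain
  ext x
  simp only [Set.mem_iUnion, Set.mem_empty_iff_false, iff_false]
  rintro ⟨k, hk⟩
  rw [if_neg] at hk
  · exact hk
  · exact not_le.mpr (Fin.castSucc_lt_last k)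

/-- The action of a simplicial operator `α : [m] → [n]` on `X^G`:
the parts are merged or deleted according to `α`, and the subgraph is replaced
by its restriction (spanned subgraph) to the remaining vertices. -/
def act {m n : ℕ} (α : Fin (m + 1) → Fin (n + 1)) (hα : Monotone α)
    (σ : GSimplex G n) : GSimplex G m where
  H := σ.H.induce (σ.chain (α 0) \ σ.chain (α (Fin.last m)))
  S j := σ.chain (α j.castSucc) \ σ.chain (α j.succ)
  cover := by
    have := telescope_iUnion (fun j => σ.chain (α j)) (σ.chain_antitone.comp_monotone hα)
    simpa using this
  disj := disjoint_layers (fun j => σ.chain (α j)) (σ.chain_antitone.comp_monotone hα)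

/-- The `i`-th face map `X^G_{n+1} → X^G_n`. -/
def face {n : ℕ} (i : Fin (n + 2)) : GSimplex G (n + 1) → GSimplex G n :=
  act i.succAbove (Fin.strictMono_succAbove i).monotone

/-- The `i`-th degeneracy map `X^G_n → X^G_{n+1}`. -/
def degen {n : ℕ} (i : Fin (n + 1)) : GSimplex G n → GSimplex G (n + 1) :=
  act i.predAbove (Fin.predAbove_right_monotone i)

/-- The element of `X^G_1` corresponding to a subgraph `H` of `G`. -/
def ofSubgraph (H : G.Subgraph) : GSimplex G 1 where
  H := H
  S := fun _ => H.verts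
  cover := Set.iUnion_const _
  disj := fun i j hij => absurd (Subsingleton.elim i j) hij

end GSimplex

end GraphCore

namespace CutTree

variable (T : CutTree)

/-- The underlying (simple) graph of a rooted tree: the edges are the covering
pairs of the order. -/
def underlying : SimpleGraph T.V := SimpleGraph.fromRel (fun a b => a ⋖ b)

/-- The simplicial map `U : X^T → X^G` sending a layered admissible subforest to
its underlying subgraph together with the vertex partition given by the layers. -/
def Umap {n : ℕ} (σ : T.Simplex n) : GSimplex T.underlying n where
  H := (⊤ : T.underlying.Subgraph).induce (σ.L 0)
  S j := σ.L j.castSucc \ σ.L j.succ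
  cover := by
    have := telescope_iUnion σ.L σ.antitone
    rw [this, σ.last_eq]
    simp [SimpleGraph.Subgraph.induce_verts]
  disj := disjoint_layers σ.L σ.antitone

/-- The degree of a vertex in (the underlying graph of) a rooted tree. -/
noncomputable def degree (v : T.V) : ℕ := Nat.card {w : T.V // v ⋖ w ∨ w ⋖ v}

end CutTree

/-!
The parts of `U σ` are the successive differences of the layering `L`, so the chain of
remaining vertex sets of `U σ` is `L` itself. Both actions of a monotone `α` are then given
by the layering `j ↦ L (α j) \ L (α (last m))`, and on subgraphs restricting the spanned subgraph
on `L 0` to a subset of `L 0` gives the spanned subgraph on that subset.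
-/

theorem SimpleGraph.Subgraph.induce_induce_of_subset {V : Type} {G : SimpleGraph V}
    (G' : G.Subgraph) {s t : Set V} (hst : s ⊆ t) :
    (G'.induce t).induce s = G'.induce s := by
  ext a b
  · rfl
  · simp only [SimpleGraph.Subgraph.induce_adj]
    exact ⟨fun ⟨ha, hb, _, _, hab⟩ => ⟨ha, hb, hab⟩,
      fun ⟨ha, hb, hab⟩ => ⟨ha, hb, hst ha, hst hb, hab⟩⟩

section Layers

variable {V : Type} {m : ℕ} {M : Fin (m + 1) → Set V}

theorem exists_mem_layer_of_mem {x : V} (hx : x ∉ M (Fin.last m))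
    (j : Fin (m + 1)) (hxj : x ∈ M j) :
    ∃ k : Fin m, j ≤ k.castSucc ∧ x ∈ M k.castSucc \ M k.succ := by
  induction j using Fin.reverseInduction with
  | last => exact absurd hxj hx
  | cast k ih =>
    by_cases hxk : x ∈ M k.succ
    · obtain ⟨l, hkl, hl⟩ := ih hxk
      exact ⟨l, (Fin.castSucc_le_succ k).trans hkl, hl⟩
    · exact ⟨k, le_rfl, hxj, hxk⟩

theorem iUnion_layers_ge (hM : Antitone M) (j : Fin (m + 1)) :
    (⋃ k : Fin m, if j ≤ k.castSucc then M k.castSucc \ M k.succ else ∅) =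
      M j \ M (Fin.last m) := by
  ext x
  simp only [Set.mem_iUnion]
  constructor
  · rintro ⟨k, hk⟩
    split_ifs at hk with hjk
    · exact ⟨hM hjk hk.1, fun hx => hk.2 (hM (Fin.le_last _) hx)⟩
    · exact hk.elim
  · rintro ⟨hxj, hx⟩
    obtain ⟨k, hjk, hk⟩ := exists_mem_layer_of_mem hx j hxj
    exact ⟨k, by rwa [if_pos hjk]⟩

end Layers

namespace CutTree

variable (T : CutTree)

theorem chain_Umap {n : ℕ} (σ : T.Simplex n) (j : Fin (n + 1)) :
    (T.Umap σ).chain j = σ.L j := by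
  have h := iUnion_layers_ge σ.antitone j
  rwa [σ.last_eq, Set.sdiff_empty] at h

theorem Umap_act {m n : ℕ} (α : Fin (m + 1) → Fin (n + 1)) (hα : Monotone α)
    (σ : T.Simplex n) : T.Umap (T.act α hα σ) = GSimplex.act α hα (T.Umap σ) := by
  ext1
  · have hsub : σ.L (α 0) \ σ.L (α (Fin.last m)) ⊆ σ.L 0 :=
      fun _ hx => σ.antitone (Fin.zero_le _) hx.1
    change (⊤ : T.underlying.Subgraph).induce (σ.L (α 0) \ σ.L (α (Fin.last m))) =
      ((⊤ : T.underlying.Subgraph).induce (σ.L 0)).induce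
        ((T.Umap σ).chain (α 0) \ (T.Umap σ).chain (α (Fin.last m)))
    rw [chain_Umap, chain_Umap, SimpleGraph.Subgraph.induce_induce_of_subset _ hsub]
  · funext j
    change _ = (T.Umap σ).chain (α j.castSucc) \ (T.Umap σ).chain (α j.succ)
    rw [chain_Umap, chain_Umap]
    exact sdiff_sdiff_sdiff_cancel_right (σ.antitone (hα (Fin.le_last j.succ)))

end CutTree

theorem Umap_simplicial (T : CutTree) :
    (∀ (n : ℕ) (i : Fin (n + 2)) (σ : T.Simplex (n + 1)),
      T.Umap (T.face i σ) = GSimplex.face i (T.Umap σ)) ∧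
    (∀ (n : ℕ) (i : Fin (n + 1)) (σ : T.Simplex n),
      T.Umap (T.degen i σ) = GSimplex.degen i (T.Umap σ)) :=
  ⟨fun _ _ σ => T.Umap_act _ _ σ, fun _ _ σ => T.Umap_act _ _ σ⟩
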